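/- For every decreasing rule δ ∈ {π⁻, 𝔣4}, every rule μ ∈ {π⁺, λ, J}, and all modal trees T, S: if T rewrites to S by one δ-step followed by one μ-step, then T rewrites to S by finitely many (possibly zero) μ-steps followed by finitely many (possibly zero) steps by decreasing rules. -/

import Mathlib

namespace TRC

/-- Strictly positive formulas of `L⁺`. -/
inductive SPF : Type where
  | top : SPF
  | var : ℕ → SPF
  | dia : ℕ → SPF → SPF
  | and : SPF → SPF → SPF

/-- The sequent system `K⁺`. -/
inductive KPlus : SPF → SPF → Prop where
  | id (φ) : KPlus φ φ
  | topI (φ) : KPlus φ .top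
  | cut {φ ψ χ} : KPlus φ ψ → KPlus ψ χ → KPlus φ χ
  | andE₁ (φ ψ) : KPlus (.and φ ψ) φ
  | andE₂ (φ ψ) : KPlus (.and φ ψ) ψ
  | andI {φ ψ χ} : KPlus φ ψ → KPlus φ χ → KPlus φ (.and ψ χ)
  | dist {φ ψ} (α) : KPlus φ ψ → KPlus (.dia α φ) (.dia α ψ)

/-- The Reflection Calculus `RC`. -/
inductive RC : SPF → SPF → Prop where
  | id (φ) : RC φ φ
  | topI (φ) : RC φ .top
  | cut {φ ψ χ} : RC φ ψ → RC ψ χ → RC φ χ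
  | andE₁ (φ ψ) : RC (.and φ ψ) φ
  | andE₂ (φ ψ) : RC (.and φ ψ) ψ
  | andI {φ ψ χ} : RC φ ψ → RC φ χ → RC φ (.and ψ χ)
  | dist {φ ψ} (α) : RC φ ψ → RC (.dia α φ) (.dia α ψ)
  | trans (α φ) : RC (.dia α (.dia α φ)) (.dia α φ)
  | mono {α β} (φ) : β < α → RC (.dia α φ) (.dia β φ)
  | jax {α β} (φ ψ) : β < α → RC (.and (.dia α φ) (.dia β ψ)) (.dia α (.and φ (.dia β ψ)))

/-- Modal depth. -/
def SPF.md : SPF → ℕ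
  | .top => 0
  | .var _ => 0
  | .dia _ φ => φ.md + 1
  | .and φ ψ => max φ.md ψ.md

/-- Modal trees. -/
inductive MTree : Type where
  | node : List ℕ → List (ℕ × MTree) → MTree

/-- Sum of modal trees. -/
def MTree.sum : MTree → MTree → MTree
  | .node Δ₁ Γ₁, .node Δ₂ Γ₂ => .node (Δ₁ ++ Δ₂) (Γ₁ ++ Γ₂)

mutual
/-- Height of a modal tree. -/
def MTree.height : MTree → ℕ
  | .node _ Γ => heightL Γ
def heightL : List (ℕ × MTree) → ℕ
  | [] => 0
  | (_, S) :: Γ => max (S.height + 1) (heightL Γ)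
end

mutual
/-- `T.IsPos k`: the (1-indexed) string `k` is a position of `T`. -/
def MTree.IsPos : MTree → List ℕ → Prop
  | _, [] => True
  | .node _ Γ, i :: k => isPosL Γ i k
def isPosL : List (ℕ × MTree) → ℕ → List ℕ → Prop
  | [], _, _ => False
  | _ :: _, 0, _ => False
  | (_, S) :: _, 1, k => S.IsPos k
  | _ :: Γ, n+2, k => isPosL Γ (n+1) k
end

mutual
/-- Subtree of `T` at position `k` (returning a default junk value off positions). -/
def MTree.subtree : MTree → List ℕ → MTree
  | T, [] => T
  | .node Δ Γ, i :: k => subtreeL (.node Δ Γ) Γ i k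
def subtreeL : MTree → List (ℕ × MTree) → ℕ → List ℕ → MTree
  | d, [], _, _ => d
  | d, _ :: _, 0, _ => d
  | _, (_, S) :: _, 1, k => S.subtree k
  | d, _ :: Γ, n+2, k => subtreeL d Γ (n+1) k
end

mutual
/-- `T.replace S k`: replace the subtree of `T` at position `k` by `S`. -/
def MTree.replace : MTree → MTree → List ℕ → MTree
  | _, S, [] => S
  | .node Δ Γ, S, i :: k => .node Δ (replaceL Γ S i k)
def replaceL : List (ℕ × MTree) → MTree → ℕ → List ℕ → List (ℕ × MTree)
  | [], _, _, _ => []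
  | Γ, _, 0, _ => Γ
  | (α, C) :: Γ, S, 1, k => (α, C.replace S k) :: Γ
  | x :: Γ, S, n+2, k => x :: replaceL Γ S (n+1) k
end

/-- Names of the eight rewriting rules of TRC. -/
inductive Rule : Type where
  | rhoP | rhoM | sigma | piP | piM | four | lam | jay
  deriving DecidableEq

/-- One rewriting step performed at the root. -/
inductive RootStep : Rule → MTree → MTree → Prop where
  | rhoP {Δ Γ i p} (hi : 1 ≤ i) (h : Δ[i-1]? = some p) :
      RootStep .rhoP (.node Δ Γ) (.node (p :: Δ) Γ)
  | rhoM {Δ Γ i} (hi : 1 ≤ i) (h : i - 1 < Δ.length) :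
      RootStep .rhoM (.node Δ Γ) (.node (Δ.eraseIdx (i-1)) Γ)
  | sigma {Δ Γ i j x y} (hi : 1 ≤ i) (hj : 1 ≤ j) (hij : i ≠ j)
      (hx : Γ[i-1]? = some x) (hy : Γ[j-1]? = some y) :
      RootStep .sigma (.node Δ Γ) (.node Δ ((Γ.set (j-1) x).set (i-1) y))
  | piP {Δ Γ i x} (hi : 1 ≤ i) (hx : Γ[i-1]? = some x) :
      RootStep .piP (.node Δ Γ) (.node Δ (x :: Γ))
  | piM {Δ Γ i} (hi : 1 ≤ i) (h : i - 1 < Γ.length) :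
      RootStep .piM (.node Δ Γ) (.node Δ (Γ.eraseIdx (i-1)))
  | four {Δ Γ i j β Δt Γt S} (hi : 1 ≤ i) (hj : 1 ≤ j)
      (hΓ : Γ[i-1]? = some (β, MTree.node Δt Γt)) (hΓt : Γt[j-1]? = some (β, S)) :
      RootStep .four (.node Δ Γ) (.node Δ (Γ.set (i-1) (β, S)))
  | lam {Δ Γ i α β S} (hi : 1 ≤ i) (hβ : β < α) (hΓ : Γ[i-1]? = some (α, S)) :
      RootStep .lam (.node Δ Γ) (.node Δ (Γ.set (i-1) (β, S)))
  | jay {Δ Γ i j α β Δt Γt S} (hi : 1 ≤ i) (hj : 1 ≤ j) (hij : i ≠ j) (hβ : β < α)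
      (hΓi : Γ[i-1]? = some (α, MTree.node Δt Γt)) (hΓj : Γ[j-1]? = some (β, S)) :
      RootStep .jay (.node Δ Γ)
        (.node Δ ((Γ.set (i-1) (α, MTree.node Δt (Γt ++ [(β, S)]))).eraseIdx (j-1)))

/-- One step of the rule `r`, applied at some position. -/
def StepR (r : Rule) (T T' : MTree) : Prop :=
  ∃ k S, T.IsPos k ∧ RootStep r (T.subtree k) S ∧ T' = T.replace S k

/-- One step of the rewriting relation `↪`. -/
def Step (T T' : MTree) : Prop := ∃ r, StepR r T T'

/-- The rewriting relation `↪*`. -/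
def Steps : MTree → MTree → Prop := Relation.ReflTransGen Step

/-- TRC-equivalence `↔*`. -/
def TEquiv (T T' : MTree) : Prop := Steps T T' ∧ Steps T' T

/-- `T ↪^Ω S` : rewriting applying the rules of `Ω` in order, one step each. -/
inductive StepsOf : List Rule → MTree → MTree → Prop where
  | nil (T) : StepsOf [] T T
  | cons {r Ω T U S} : StepR r T U → StepsOf Ω U S → StepsOf (r :: Ω) T S

def AtomicStep (T S : MTree) : Prop := StepR .rhoP T S ∨ StepR .rhoM T S
def DecreasingStep (T S : MTree) : Prop := StepR .piM T S ∨ StepR .four T S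
def ModalStep (T S : MTree) : Prop := StepR .lam T S ∨ StepR .jay T S

/-- Finite conjunctions (empty conjunction is `⊤`). -/
def bigAnd : List SPF → SPF
  | [] => .top
  | φ :: l => .and φ (bigAnd l)

mutual
/-- The embedding `ℱ` of modal trees into formulas. -/
def MTree.toFormula : MTree → SPF
  | .node Δ Γ => .and (bigAnd (Δ.map SPF.var)) (diamL Γ)
def diamL : List (ℕ × MTree) → SPF
  | [] => .top
  | (α, S) :: Γ => .and (.dia α S.toFormula) (diamL Γ)
end

/-- The embedding `𝒯` of formulas into modal trees. -/
def SPF.toTree : SPF → MTree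
  | .top => .node [] []
  | .var p => .node [p] []
  | .dia α φ => .node [] [(α, φ.toTree)]
  | .and φ ψ => φ.toTree.sum ψ.toTree

/-- Nonempty conjunction `φ₁ ∧ (φ₂ ∧ (… ∧ φₙ))`. -/
def conjNE : SPF → List SPF → SPF
  | φ, [] => φ
  | φ, ψ :: l => .and φ (conjNE ψ l)

end TRC

/-!
Both decreasing rules act on the child list of a single node: π⁻ erases a child, and 𝔣4 (like
any step inside a child) replaces one child by another child with the same label. A step of
π⁺, λ or J at that node either leaves this child alone, and then it acts in the same way
whatever tree sits in that slot, so the two steps can simply be swapped; or it involves the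
child itself: it duplicates it, relabels it, rewrites inside it, moves it into a sibling, or
receives a sibling into it. In each of these cases the same μ-steps (at most two) can be
performed on the original child, after which the decreasing step is repeated (at most twice).
Rewriting inside a child is the only case that needs induction on the tree.
-/

namespace List

variable {α : Type*}

theorem exists_eq_append_cons_of_getElem? {l : List α} {n : ℕ} {a : α} (h : l[n]? = some a) :
    ∃ C E, l = C ++ a :: E ∧ C.length = n := by
  obtain ⟨hn, rfl⟩ := getElem?_eq_some_iff.1 h
  exact ⟨l.take n, l.drop (n + 1), by rw [getElem_cons_drop, take_append_drop],
    length_take_of_le hn.le⟩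

theorem append_cons_eq_append_cons_cases {P Q C E : List α} {y a : α}
    (h : P ++ y :: Q = C ++ a :: E) :
    (P = C ∧ y = a ∧ Q = E) ∨ (∃ c, C = P ++ y :: c ∧ Q = c ++ a :: E) ∨
      ∃ c, P = C ++ a :: c ∧ E = c ++ y :: Q := by
  rcases append_eq_append_iff.1 h with ⟨_ | ⟨b, c⟩, rfl, hc⟩ | ⟨_ | ⟨b, c⟩, rfl, hc⟩
  · simp_all
  · obtain ⟨rfl, rfl⟩ := cons_eq_cons.1 hc
    exact Or.inr (Or.inl ⟨c, rfl, rfl⟩)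
  · simp_all
  · obtain ⟨rfl, rfl⟩ := cons_eq_cons.1 hc
    exact Or.inr (Or.inr ⟨c, rfl, rfl⟩)

def Splice (a : α) (R l l' : List α) : Prop := ∃ C E, l = C ++ a :: E ∧ l' = C ++ R ++ E

theorem Splice.replace (C E : List α) (a b : α) : Splice a [b] (C ++ a :: E) (C ++ b :: E) :=
  ⟨C, E, rfl, by simp⟩

theorem Splice.erase (C E : List α) (a : α) : Splice a [] (C ++ a :: E) (C ++ E) :=
  ⟨C, E, rfl, by simp⟩

theorem Splice.append_right {a : α} {R l l' : List α} (h : Splice a R l l') (L : List α) :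
    Splice a R (l ++ L) (l' ++ L) := by
  obtain ⟨C, E, rfl, rfl⟩ := h
  exact ⟨C, E ++ L, by simp, by simp⟩

theorem splice_singleton_iff {a b : α} {l l' : List α} :
    Splice a [b] l l' ↔ ∃ n, l[n]? = some a ∧ l' = l.set n b := by
  constructor
  · rintro ⟨C, E, rfl, rfl⟩
    exact ⟨C.length, by simp, by simp⟩
  · rintro ⟨n, h, rfl⟩
    obtain ⟨C, E, rfl, rfl⟩ := exists_eq_append_cons_of_getElem? h
    exact ⟨C, E, rfl, by simp⟩

theorem splice_nil_iff {a : α} {l l' : List α} :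
    Splice a [] l l' ↔ ∃ n, l[n]? = some a ∧ l' = l.eraseIdx n := by
  constructor
  · rintro ⟨C, E, rfl, rfl⟩
    exact ⟨C.length, by simp, by simp [eraseIdx_append_of_length_le]⟩
  · rintro ⟨n, h, rfl⟩
    obtain ⟨C, E, rfl, rfl⟩ := exists_eq_append_cons_of_getElem? h
    exact ⟨C, E, rfl, by simp [eraseIdx_append_of_length_le]⟩

theorem exists_splice_nil_splice_singleton_iff {a a' b : α} {l l' : List α} :
    (∃ l₁, Splice b [] l l₁ ∧ Splice a [a'] l₁ l') ↔
      ∃ i j, i ≠ j ∧ l[i]? = some a ∧ l[j]? = some b ∧ l' = (l.set i a').eraseIdx j := by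
  simp only [splice_nil_iff, splice_singleton_iff]
  constructor
  · rintro ⟨_, ⟨j, hb, rfl⟩, k, ha, rfl⟩
    rw [getElem?_eraseIdx] at ha
    by_cases hjk : j ≤ k
    · exact ⟨k + 1, j, by omega, by simpa [show ¬ k < j by omega] using ha, hb,
        set_eraseIdx_le hjk⟩
    · exact ⟨k, j, by omega, by simpa [show k < j by omega] using ha, hb,
        set_eraseIdx_gt (by omega)⟩
  · rintro ⟨i, j, hij, ha, hb, rfl⟩
    refine ⟨_, ⟨j, hb, rfl⟩, if j < i then i - 1 else i, ?_,
      by rw [eraseIdx_set]; split_ifs <;> simp_all⟩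
    rw [getElem?_eraseIdx]
    split_ifs <;> first | omega | (convert ha using 2; omega)

theorem Splice.hole_cases {a y : α} {R P Q l' : List α} (h : Splice a R (P ++ y :: Q) l') :
    (a = y ∧ l' = P ++ R ++ Q) ∨
      ∃ P' Q', l' = P' ++ y :: Q' ∧ ∀ x, Splice a R (P ++ x :: Q) (P' ++ x :: Q') := by
  obtain ⟨C, E, hl, rfl⟩ := h
  rcases append_cons_eq_append_cons_cases hl with
    ⟨rfl, rfl, rfl⟩ | ⟨c, rfl, rfl⟩ | ⟨c, rfl, rfl⟩
  · exact Or.inl ⟨rfl, rfl⟩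
  · exact Or.inr ⟨P, c ++ R ++ E, by simp, fun x => ⟨P ++ x :: c, E, by simp, by simp⟩⟩
  · exact Or.inr ⟨C ++ R ++ c, Q, by simp, fun x => ⟨C, c ++ x :: Q, by simp, by simp⟩⟩

theorem Splice.frame_insert {a : α} {R P Q l' : List α} (h : Splice a R (P ++ Q) l') :
    ∃ P' Q', l' = P' ++ Q' ∧ ∀ x, Splice a R (P ++ x :: Q) (P' ++ x :: Q') := by
  obtain ⟨C, E, hl, rfl⟩ := h
  rcases append_eq_append_iff.1 hl with ⟨c, rfl, rfl⟩ | ⟨_ | ⟨b, c⟩, rfl, hc⟩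
  · exact ⟨P, c ++ R ++ E, by simp, fun x => ⟨P ++ x :: c, E, by simp, by simp⟩⟩
  · subst hc
    exact ⟨C, R ++ E, by simp, fun x => ⟨C ++ [x], E, by simp, by simp⟩⟩
  · obtain ⟨rfl, rfl⟩ := cons_eq_cons.1 hc
    exact ⟨C ++ R ++ c, Q, by simp, fun x => ⟨C, c ++ x :: Q, by simp, by simp⟩⟩

end List

namespace TRC

open List Relation

theorem MTree.induction_on {motive : MTree → Prop}
    (h : ∀ Δ Γ, (∀ α A, (α, A) ∈ Γ → motive A) → motive (.node Δ Γ)) (T : MTree) :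
    motive T :=
  MTree.rec (motive_2 := fun Γ => ∀ α A, (α, A) ∈ Γ → motive A)
    (motive_3 := fun p => motive p.2)
    h (fun _ _ h => nomatch h)
    (fun _ _ hp hΓ α A hA => (mem_cons.1 hA).elim (fun e => by subst e; exact hp) (hΓ α A))
    (fun _ _ hA => hA) T

inductive Rewrite (r : Rule) : MTree → MTree → Prop where
  | root {T T'} : RootStep r T T' → Rewrite r T T'
  | cong {Δ P α A A' Q} : Rewrite r A A' →
      Rewrite r (.node Δ (P ++ (α, A) :: Q)) (.node Δ (P ++ (α, A') :: Q))

@[simp] theorem MTree.subtree_nil (T : MTree) : T.subtree [] = T := by cases T; rfl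
@[simp] theorem MTree.replace_nil (T S : MTree) : T.replace S [] = S := by cases T; rfl
@[simp] theorem MTree.isPos_nil (T : MTree) : T.IsPos [] := by cases T; trivial

theorem exists_of_isPosL {k : List ℕ} {Γ : List (ℕ × MTree)} {i : ℕ} (h : isPosL Γ i k) :
    ∃ P α A Q, Γ = P ++ (α, A) :: Q ∧ A.IsPos k ∧
      (∀ d, subtreeL d Γ i k = A.subtree k) ∧
      ∀ S, replaceL Γ S i k = P ++ (α, A.replace S k) :: Q := by
  induction Γ generalizing i with
  | nil => simp [isPosL] at h
  | cons x Γ ih =>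
    match i, h with
    | 1, h => exact ⟨[], x.1, x.2, Γ, rfl, h, fun _ => rfl, fun _ => rfl⟩
    | n + 2, h =>
      obtain ⟨P, α, A, Q, rfl, hp, hs, hr⟩ := ih h
      exact ⟨x :: P, α, A, Q, rfl, hp, hs, fun S => by simp only [replaceL, hr S, cons_append]⟩

theorem isPosL_append_cons {k : List ℕ} (P : List (ℕ × MTree)) (α : ℕ) (A : MTree)
    (Q : List (ℕ × MTree)) (h : A.IsPos k) :
    isPosL (P ++ (α, A) :: Q) (P.length + 1) k ∧
      (∀ d, subtreeL d (P ++ (α, A) :: Q) (P.length + 1) k = A.subtree k) ∧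
      ∀ S, replaceL (P ++ (α, A) :: Q) S (P.length + 1) k = P ++ (α, A.replace S k) :: Q := by
  induction P with
  | nil => exact ⟨h, fun _ => rfl, fun _ => rfl⟩
  | cons x P ih =>
    obtain ⟨h₁, h₂, h₃⟩ := ih
    exact ⟨h₁, h₂, fun S => by simp only [cons_append, length_cons, replaceL, h₃ S]⟩

theorem rewrite_iff_stepR {r : Rule} {T S : MTree} : Rewrite r T S ↔ StepR r T S := by
  constructor
  · intro h
    induction h with
    | root h => exact ⟨[], _, by simp, by simpa, by simp⟩
    | @cong Δ P α A A' Q _ ih =>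
      obtain ⟨k, V, hpos, hroot, rfl⟩ := ih
      obtain ⟨h₁, h₂, h₃⟩ := isPosL_append_cons P α A Q hpos
      exact ⟨(P.length + 1) :: k, V, h₁, by simpa [MTree.subtree, h₂] using hroot,
        by simp [MTree.replace, h₃]⟩
  · rintro ⟨k, V, hpos, hroot, rfl⟩
    induction k generalizing T with
    | nil => simpa using Rewrite.root (by simpa using hroot)
    | cons i k ih =>
      obtain ⟨Δ, Γ⟩ := T
      obtain ⟨P, α, A, Q, rfl, hp, hs, hr⟩ := exists_of_isPosL hpos
      simp only [MTree.subtree, hs] at hroot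
      simpa [MTree.replace, hr] using (ih hp hroot).cong (Δ := Δ) (P := P) (α := α) (Q := Q)

inductive ElemStep : Rule → ℕ × MTree → ℕ × MTree → Prop where
  | cong {r α A A'} : Rewrite r A A' → ElemStep r (α, A) (α, A')
  | lam {α β W} : β < α → ElemStep .lam (α, W) (β, W)
  | four {β Δ Γ W} : (β, W) ∈ Γ → ElemStep .four (β, .node Δ Γ) (β, W)

/-- An `r`-step on a node `⟨Δ; Γ⟩`, at the root or inside a child, as an operation on `Γ`. -/
inductive ChildStep : Rule → List (ℕ × MTree) → List (ℕ × MTree) → Prop where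
  | site {r x y Γ Γ'} : ElemStep r x y → Splice x [y] Γ Γ' → ChildStep r Γ Γ'
  | dup {z Γ} : z ∈ Γ → ChildStep .piP Γ (z :: Γ)
  | erase {x Γ Γ'} : Splice x [] Γ Γ' → ChildStep .piM Γ Γ'
  | jay {α β Δ Θ W Γ Γ₁ Γ'} : β < α → Splice (β, W) [] Γ Γ₁ →
      Splice (α, .node Δ Θ) [(α, .node Δ (Θ ++ [(β, W)]))] Γ₁ Γ' →
      ChildStep .jay Γ Γ'

theorem ChildStep.rewrite {r : Rule} {Γ Γ' : List (ℕ × MTree)} (h : ChildStep r Γ Γ')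
    (Δ : List ℕ) : Rewrite r (.node Δ Γ) (.node Δ Γ') := by
  cases h with
  | site hxy hs =>
    cases hxy with
    | cong hA =>
      obtain ⟨C, E, rfl, rfl⟩ := hs
      simpa using hA.cong (Δ := Δ) (P := C) (Q := E)
    | lam hβ =>
      obtain ⟨n, hn, rfl⟩ := splice_singleton_iff.1 hs
      exact .root (.lam (i := n + 1) (by omega) hβ hn)
    | four hW =>
      obtain ⟨n, hn, rfl⟩ := splice_singleton_iff.1 hs
      obtain ⟨m, hm⟩ := mem_iff_getElem?.1 hW
      exact .root (.four (i := n + 1) (j := m + 1) (by omega) (by omega) hn hm)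
  | dup hz =>
    obtain ⟨n, hn⟩ := mem_iff_getElem?.1 hz
    exact .root (.piP (i := n + 1) (by omega) hn)
  | erase hs =>
    obtain ⟨n, hn, rfl⟩ := splice_nil_iff.1 hs
    exact .root (.piM (i := n + 1) (by omega) (List.getElem?_eq_some_iff.1 hn).1)
  | jay hβ h₁ h₂ =>
    obtain ⟨i, j, hij, hi, hj, rfl⟩ :=
      exists_splice_nil_splice_singleton_iff.1 ⟨_, h₁, h₂⟩
    exact .root (.jay (i := i + 1) (j := j + 1) (by omega) (by omega) (by omega) hβ hi hj)

theorem RootStep.exists_childStep {r : Rule} {Δ : List ℕ} {Γ : List (ℕ × MTree)} {S : MTree}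
    (hr : r ∈ [Rule.piP, .piM, .lam, .four, .jay]) (h : RootStep r (.node Δ Γ) S) :
    ∃ Γ', S = .node Δ Γ' ∧ ChildStep r Γ Γ' := by
  cases h with
  | rhoP => simp at hr
  | rhoM => simp at hr
  | sigma => simp at hr
  | piP _ hx => exact ⟨_, rfl, .dup (mem_of_getElem? hx)⟩
  | piM _ h => exact ⟨_, rfl, .erase (splice_nil_iff.2 ⟨_, getElem?_eq_getElem h, rfl⟩)⟩
  | four _ _ hΓ hΓt =>
    exact ⟨_, rfl,
      .site (.four (mem_of_getElem? hΓt)) (splice_singleton_iff.2 ⟨_, hΓ, rfl⟩)⟩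
  | lam _ hβ hΓ => exact ⟨_, rfl, .site (.lam hβ) (splice_singleton_iff.2 ⟨_, hΓ, rfl⟩)⟩
  | jay _ _ hij hβ hΓi hΓj =>
    obtain ⟨_, h₁, h₂⟩ :=
      exists_splice_nil_splice_singleton_iff.2 ⟨_, _, by omega, hΓi, hΓj, rfl⟩
    exact ⟨_, rfl, .jay hβ h₁ h₂⟩

theorem Rewrite.exists_childStep {r : Rule} {Δ : List ℕ} {Γ : List (ℕ × MTree)} {S : MTree}
    (hr : r ∈ [Rule.piP, .piM, .lam, .four, .jay]) (h : Rewrite r (.node Δ Γ) S) :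
    ∃ Γ', S = .node Δ Γ' ∧ ChildStep r Γ Γ' := by
  cases h with
  | root h => exact h.exists_childStep hr
  | cong h => exact ⟨_, rfl, .site (.cong h) (Splice.replace _ _ _ _)⟩

theorem ChildStep.append_right {r : Rule} {Γ Γ' : List (ℕ × MTree)} (h : ChildStep r Γ Γ')
    (L : List (ℕ × MTree)) : ChildStep r (Γ ++ L) (Γ' ++ L) := by
  cases h with
  | site hxy hs => exact .site hxy (hs.append_right L)
  | dup hz => exact .dup (mem_append_left L hz)
  | erase hs => exact .erase (hs.append_right L)
  | jay hβ h₁ h₂ => exact .jay hβ (h₁.append_right L) (h₂.append_right L)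

theorem ChildStep.frame_insert {r : Rule} {P Q Γ' : List (ℕ × MTree)}
    (h : ChildStep r (P ++ Q) Γ') :
    ∃ P' Q', Γ' = P' ++ Q' ∧ ∀ x, ChildStep r (P ++ x :: Q) (P' ++ x :: Q') := by
  generalize hΓ : P ++ Q = Γ at h
  cases h with subst hΓ
  | site hxy hs =>
    obtain ⟨P', Q', rfl, hf⟩ := hs.frame_insert
    exact ⟨P', Q', rfl, fun x => .site hxy (hf x)⟩
  | dup hz =>
    exact ⟨_ :: P, Q, rfl, fun x => .dup (by simp only [mem_append, mem_cons] at hz ⊢; tauto)⟩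
  | erase hs =>
    obtain ⟨P', Q', rfl, hf⟩ := hs.frame_insert
    exact ⟨P', Q', rfl, fun x => .erase (hf x)⟩
  | jay hβ h₁ h₂ =>
    obtain ⟨P₁, Q₁, rfl, hf₁⟩ := h₁.frame_insert
    obtain ⟨P', Q', rfl, hf₂⟩ := h₂.frame_insert
    exact ⟨P', Q', rfl, fun x => .jay hβ (hf₁ x) (hf₂ x)⟩

theorem ChildStep.hole_cases {r : Rule} {P Q Γ' : List (ℕ × MTree)} {y : ℕ × MTree}
    (h : ChildStep r (P ++ y :: Q) Γ') :
    (∃ P' Q', Γ' = P' ++ y :: Q' ∧ ∀ x, ChildStep r (P ++ x :: Q) (P' ++ x :: Q')) ∨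
    (∃ y', ElemStep r y y' ∧ Γ' = P ++ y' :: Q) ∨
    (r = .piP ∧ Γ' = y :: (P ++ y :: Q)) ∨
    (r = .piM ∧ Γ' = P ++ Q) ∨
    (r = .jay ∧ ∃ α Δ Θ, y.1 < α ∧
      Splice (α, .node Δ Θ) [(α, .node Δ (Θ ++ [y]))] (P ++ Q) Γ') ∨
    (r = .jay ∧ ∃ α Δ Θ m P' Q', y = (α, .node Δ Θ) ∧ m.1 < α ∧
      Γ' = P' ++ (α, .node Δ (Θ ++ [m])) :: Q' ∧
      ∀ Δ' Θ', ChildStep .jay (P ++ (α, .node Δ' Θ') :: Q)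
        (P' ++ (α, .node Δ' (Θ' ++ [m])) :: Q')) := by
  generalize hΓ : P ++ y :: Q = Γ at h
  cases h with subst hΓ
  | site hxy hs =>
    rcases hs.hole_cases with ⟨rfl, rfl⟩ | ⟨P', Q', rfl, hf⟩
    · exact Or.inr (Or.inl ⟨_, hxy, by simp⟩)
    · exact Or.inl ⟨P', Q', rfl, fun x => .site hxy (hf x)⟩
  | @dup z _ hz =>
    by_cases hzy : z = y
    · exact Or.inr (Or.inr (Or.inl ⟨rfl, by rw [hzy]⟩))
    · refine Or.inl ⟨z :: P, Q, rfl, fun x => .dup ?_⟩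
      simp only [mem_append, mem_cons] at hz ⊢
      tauto
  | erase hs =>
    rcases hs.hole_cases with ⟨rfl, rfl⟩ | ⟨P', Q', rfl, hf⟩
    · exact Or.inr (Or.inr (Or.inr (Or.inl ⟨rfl, by simp⟩)))
    · exact Or.inl ⟨P', Q', rfl, fun x => .erase (hf x)⟩
  | jay hβ h₁ h₂ =>
    rcases h₁.hole_cases with ⟨rfl, rfl⟩ | ⟨P₁, Q₁, rfl, hf₁⟩
    · exact Or.inr (Or.inr (Or.inr (Or.inr (Or.inl ⟨rfl, _, _, _, hβ, by simpa using h₂⟩))))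
    rcases h₂.hole_cases with ⟨rfl, rfl⟩ | ⟨P', Q', rfl, hf₂⟩
    · exact Or.inr (Or.inr (Or.inr (Or.inr (Or.inr ⟨rfl, _, _, _, _, P₁, Q₁, rfl, hβ,
        by simp, fun _ _ => .jay hβ (hf₁ _) (Splice.replace _ _ _ _)⟩))))
    · exact Or.inl ⟨P', Q', rfl, fun x => .jay hβ (hf₁ x) (hf₂ x)⟩

theorem ElemStep.rewrite {r : Rule} {x y : ℕ × MTree} (h : ElemStep r x y) (Δ : List ℕ)
    (P Q : List (ℕ × MTree)) : Rewrite r (.node Δ (P ++ x :: Q)) (.node Δ (P ++ y :: Q)) :=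
  (ChildStep.site h (Splice.replace P Q x y)).rewrite Δ

def DecreasingRewrite (T S : MTree) : Prop := Rewrite .piM T S ∨ Rewrite .four T S

def RewritesThenDecreases (μ : Rule) (T S : MTree) : Prop :=
  ∃ V, ReflTransGen (Rewrite μ) T V ∧ ReflTransGen DecreasingRewrite V S

theorem Rewrite.decreasing {δ : Rule} (hδ : δ = .piM ∨ δ = .four) {T S : MTree}
    (h : Rewrite δ T S) : DecreasingRewrite T S := by
  rcases hδ with rfl | rfl
  exacts [Or.inl h, Or.inr h]

theorem ElemStep.fst_eq {δ : Rule} (hδ : δ = .piM ∨ δ = .four) {x y : ℕ × MTree}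
    (h : ElemStep δ x y) : x.1 = y.1 := by
  cases h <;> simp_all

theorem RewritesThenDecreases.cong {μ : Rule} {A A' : MTree} (h : RewritesThenDecreases μ A A')
    (Δ : List ℕ) (P : List (ℕ × MTree)) (α : ℕ) (Q : List (ℕ × MTree)) :
    RewritesThenDecreases μ (.node Δ (P ++ (α, A) :: Q)) (.node Δ (P ++ (α, A') :: Q)) := by
  obtain ⟨V, hAV, hVA'⟩ := h
  let f (B : MTree) : MTree := .node Δ (P ++ (α, B) :: Q)
  exact ⟨f V, ReflTransGen.lift f (fun _ _ => Rewrite.cong) _ _ hAV,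
    ReflTransGen.lift f (fun _ _ => Or.imp Rewrite.cong Rewrite.cong) _ _ hVA'⟩

section

variable {δ μ : Rule} {Δ : List ℕ} {P Q P' Q' Γ' : List (ℕ × MTree)} {x y : ℕ × MTree}

theorem postpone_erase (hΓ : ChildStep μ (P ++ Q) Γ') :
    RewritesThenDecreases μ (.node Δ (P ++ x :: Q)) (.node Δ Γ') := by
  obtain ⟨P', Q', rfl, hf⟩ := hΓ.frame_insert
  exact ⟨_, .single ((hf x).rewrite Δ),
    .single (Or.inl ((ChildStep.erase (.erase P' Q' x)).rewrite Δ))⟩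

theorem postpone_frame (hδ : δ = .piM ∨ δ = .four) (hxy : ElemStep δ x y)
    (hf : ∀ z, ChildStep μ (P ++ z :: Q) (P' ++ z :: Q')) :
    RewritesThenDecreases μ (.node Δ (P ++ x :: Q)) (.node Δ (P' ++ y :: Q')) :=
  ⟨_, .single ((hf x).rewrite Δ), .single ((hxy.rewrite Δ P' Q').decreasing hδ)⟩

theorem postpone_dup (hδ : δ = .piM ∨ δ = .four) (hxy : ElemStep δ x y) :
    RewritesThenDecreases .piP (.node Δ (P ++ x :: Q)) (.node Δ (y :: (P ++ y :: Q))) :=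
  ⟨_, .single ((ChildStep.dup (by simp)).rewrite Δ),
    .head ((hxy.rewrite Δ [] _).decreasing hδ)
      (.single ((hxy.rewrite Δ (y :: P) Q).decreasing hδ))⟩

theorem postpone_moved (hδ : δ = .piM ∨ δ = .four) (hxy : ElemStep δ x y) {α : ℕ}
    {Δ' : List ℕ} {Θ : List (ℕ × MTree)} (hα : y.1 < α)
    (hs : Splice (α, .node Δ' Θ) [(α, .node Δ' (Θ ++ [y]))] (P ++ Q) Γ') :
    RewritesThenDecreases .jay (.node Δ (P ++ x :: Q)) (.node Δ Γ') := by
  obtain ⟨C, E, hPQ, rfl⟩ := hs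
  obtain ⟨β, X⟩ := x
  obtain ⟨_, Y⟩ := y
  obtain rfl : β = _ := hxy.fst_eq hδ
  have hjay : ChildStep .jay (P ++ (β, X) :: Q) (C ++ (α, .node Δ' (Θ ++ [(β, X)])) :: E) :=
    .jay hα (Splice.erase P Q _) (by rw [hPQ]; exact Splice.replace C E _ _)
  have hdec := ((ElemStep.cong (α := α) (hxy.rewrite Δ' Θ [])).rewrite Δ C E).decreasing hδ
  exact ⟨_, .single (hjay.rewrite Δ), .single (by simpa using hdec)⟩

theorem postpone_elemStep (hδ : δ = .piM ∨ δ = .four)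
    (hμ : μ = .piP ∨ μ = .lam ∨ μ = .jay) {z : ℕ × MTree} (hxy : ElemStep δ x y)
    (hyz : ElemStep μ y z)
    (ih : ∀ {U S}, Rewrite δ x.2 U → Rewrite μ U S → RewritesThenDecreases μ x.2 S) :
    RewritesThenDecreases μ (.node Δ (P ++ x :: Q)) (.node Δ (P ++ z :: Q)) := by
  cases hxy with
  | lam => simp at hδ
  | @cong _ α A A' hA =>
    cases hyz with
    | cong hB => exact (ih hA hB).cong Δ P α Q
    | lam hβ => exact ⟨_, .single ((ElemStep.lam hβ).rewrite Δ P Q),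
        .single (((ElemStep.cong hA).rewrite Δ P Q).decreasing hδ)⟩
    | four => simp at hμ
  | @four β Δt Γt W hW =>
    obtain ⟨Θ₁, Θ₂, rfl⟩ := append_of_mem hW
    cases hyz with
    | cong hB =>
      exact ⟨_,
        .single ((ElemStep.cong (Rewrite.cong (P := Θ₁) (Q := Θ₂) hB)).rewrite Δ P Q),
        .single (((ElemStep.four (by simp)).rewrite Δ P Q).decreasing hδ)⟩
    | @lam _ γ _ hγ =>
      exact ⟨_, .head ((ElemStep.lam hγ).rewrite Δ P Q)
          (.single ((ElemStep.cong ((ElemStep.lam hγ).rewrite Δt Θ₁ Θ₂)).rewrite Δ P Q)),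
        .single (((ElemStep.four (by simp)).rewrite Δ P Q).decreasing hδ)⟩
    | four => simp at hμ

theorem postpone_receiver (hδ : δ = .piM ∨ δ = .four) {α : ℕ} {Δ' : List ℕ}
    {Θ : List (ℕ × MTree)} {m : ℕ × MTree} (hxy : ElemStep δ x (α, .node Δ' Θ))
    (hm : m.1 < α)
    (hf : ∀ Δ'' Θ', ChildStep .jay (P ++ (α, .node Δ'' Θ') :: Q)
      (P' ++ (α, .node Δ'' (Θ' ++ [m])) :: Q')) :
    RewritesThenDecreases .jay (.node Δ (P ++ x :: Q))
      (.node Δ (P' ++ (α, .node Δ' (Θ ++ [m])) :: Q')) := by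
  generalize hy : (α, MTree.node Δ' Θ) = y at hxy
  cases hxy with
  | lam => simp at hδ
  | @cong _ _ A _ hA =>
    obtain ⟨rfl, rfl⟩ := Prod.mk.inj hy
    obtain ⟨Δ₀, Θ₀⟩ := A
    obtain ⟨_, h, hc⟩ := hA.exists_childStep (by rcases hδ with rfl | rfl <;> simp)
    obtain ⟨rfl, rfl⟩ := MTree.node.inj h
    exact ⟨_, .single ((hf _ _).rewrite Δ),
      .single
        (((ElemStep.cong ((hc.append_right [m]).rewrite _)).rewrite Δ P' Q').decreasing hδ)⟩
  | @four _ Δt Γt W hW =>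
    obtain ⟨rfl, rfl⟩ := Prod.mk.inj hy
    obtain ⟨Θ₁, Θ₂, rfl⟩ := append_of_mem hW
    obtain ⟨b, Wm⟩ := m
    have hinner : ChildStep .jay (Θ₁ ++ (α, .node Δ' Θ) :: Θ₂ ++ [(b, Wm)])
        (Θ₁ ++ (α, .node Δ' (Θ ++ [(b, Wm)])) :: Θ₂) :=
      .jay hm (by simpa using Splice.erase (Θ₁ ++ (α, .node Δ' Θ) :: Θ₂) [] (b, Wm))
        (Splice.replace _ _ _ _)
    exact ⟨_, .head ((hf Δt _).rewrite Δ)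
        (.single ((ElemStep.cong (hinner.rewrite Δt)).rewrite Δ P' Q')),
      .single (((ElemStep.four (by simp)).rewrite Δ P' Q').decreasing hδ)⟩

end

theorem Rewrite.postpone {δ μ : Rule} (hδ : δ = .piM ∨ δ = .four)
    (hμ : μ = .piP ∨ μ = .lam ∨ μ = .jay) (T : MTree) :
    ∀ {U S}, Rewrite δ T U → Rewrite μ U S → RewritesThenDecreases μ T S := by
  induction T using MTree.induction_on with
  | h Δ Γ ih =>
    intro U S h₁ h₂
    obtain ⟨_, rfl, hc₁⟩ := h₁.exists_childStep (by rcases hδ with rfl | rfl <;> simp)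
    obtain ⟨_, rfl, hc₂⟩ :=
      h₂.exists_childStep (by rcases hμ with rfl | rfl | rfl <;> simp)
    cases hc₁ with
    | dup => simp at hδ
    | jay => simp at hδ
    | erase hs =>
      obtain ⟨P, Q, rfl, rfl⟩ := hs
      exact postpone_erase (by simpa using hc₂)
    | @site _ x y _ _ hxy hs =>
      obtain ⟨P, Q, rfl, rfl⟩ := hs
      rcases (show ChildStep μ (P ++ y :: Q) _ by simpa using hc₂).hole_cases with
        ⟨P', Q', rfl, hf⟩ | ⟨z, hyz, rfl⟩ | ⟨rfl, rfl⟩ | ⟨rfl, -⟩ |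
          ⟨rfl, _, _, _, hα, hs⟩ | ⟨rfl, _, _, _, _, P', Q', rfl, hm, rfl, hf⟩
      · exact postpone_frame hδ hxy hf
      · exact postpone_elemStep hδ hμ hxy hyz (ih x.1 x.2 (by simp))
      · exact postpone_dup hδ hxy
      · simp at hμ
      · exact postpone_moved hδ hxy hα hs
      · exact postpone_receiver hδ hxy hm hf

end TRC

/-- a decreasing step followed by a `μ`-step (`μ ∈ {π⁺, λ, J}`)
can be replaced by finitely many `μ`-steps followed by finitely many
decreasing steps. -/
theorem decreasing_permutation (δ μ : TRC.Rule)
    (hδ : δ = TRC.Rule.piM ∨ δ = TRC.Rule.four)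
    (hμ : μ = TRC.Rule.piP ∨ μ = TRC.Rule.lam ∨ μ = TRC.Rule.jay)
    (T S : TRC.MTree) (h : ∃ U, TRC.StepR δ T U ∧ TRC.StepR μ U S) :
    ∃ U, Relation.ReflTransGen (TRC.StepR μ) T U ∧
      Relation.ReflTransGen TRC.DecreasingStep U S := by
  obtain ⟨U, hTU, hUS⟩ := h
  obtain ⟨V, hTV, hVS⟩ := TRC.Rewrite.postpone hδ hμ T
    (TRC.rewrite_iff_stepR.2 hTU) (TRC.rewrite_iff_stepR.2 hUS)
  exact ⟨V, Relation.ReflTransGen.mono (fun _ _ => TRC.rewrite_iff_stepR.1) _ _ hTV,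
    Relation.ReflTransGen.mono (fun _ _ => Or.imp TRC.rewrite_iff_stepR.1 TRC.rewrite_iff_stepR.1)
      _ _ hVS⟩
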